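/- Let a_{ij}, b_{ij} (1 ≤ i,j ≤ 2) be real numbers and work in the polynomial ring ℝ[p_{11},p_{12},p_{21},p_{22}]. Let f_1 = (p_{11}+p_{12})(a_{21}p_{21}+a_{22}p_{22}) − (a_{11}p_{11}+a_{12}p_{12})(p_{21}+p_{22}) and f_2 = (p_{11}+p_{21})(b_{12}p_{12}+b_{22}p_{22}) − (b_{11}p_{11}+b_{21}p_{21})(p_{12}+p_{22}). Then the ternary cubic C = (a_{11}−a_{22})(b_{11}−b_{12})·p_{11}²p_{12} + (a_{11}−a_{21})(b_{22}−b_{11})·p_{11}²p_{21} + (a_{12}−a_{22})(b_{11}−b_{12})·p_{11}p_{12}² + (a_{11}−a_{21})(b_{22}−b_{21})·p_{11}p_{21}² + (a_{12}−a_{22})(b_{21}−b_{12})·p_{12}²p_{21} + (a_{12}−a_{21})(b_{22}−b_{21})·p_{12}p_{21}² + ((a_{12}−a_{21})(b_{22}−b_{11}) + (a_{11}−a_{22})(b_{21}−b_{12}))·p_{11}p_{12}p_{21}, which does not involve p_{22}, lies in the ideal generated by f_1 and f_2; i.e., there exist polynomials g_1, g_2 with C = g_1 f_1 + g_2 f_2.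 -/
import Mathlib

open MvPolynomial

/-- The variable `p₁₁` in `ℝ[p₁₁,p₁₂,p₂₁,p₂₂]`. -/
noncomputable def q11 : MvPolynomial (Fin 4) ℝ := X 0
/-- The variable `p₁₂`. -/
noncomputable def q12 : MvPolynomial (Fin 4) ℝ := X 1
/-- The variable `p₂₁`. -/
noncomputable def q21 : MvPolynomial (Fin 4) ℝ := X 2
/-- The variable `p₂₂`. -/
noncomputable def q22 : MvPolynomial (Fin 4) ℝ := X 3

/-- The Spohn cubic (the planar model obtained by eliminating
`p₂₂`) lies in the ideal generated by the two Spohn determinants `f₁, f₂` of a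
`2 × 2` game. -/
theorem spohn_cubic_mem_ideal
    (a11 a12 a21 a22 b11 b12 b21 b22 : ℝ) :
    ∃ g1 g2 : MvPolynomial (Fin 4) ℝ,
      C ((a11 - a22) * (b11 - b12)) * (q11 ^ 2 * q12)
      + C ((a11 - a21) * (b22 - b11)) * (q11 ^ 2 * q21)
      + C ((a12 - a22) * (b11 - b12)) * (q11 * q12 ^ 2)
      + C ((a11 - a21) * (b22 - b21)) * (q11 * q21 ^ 2)
      + C ((a12 - a22) * (b21 - b12)) * (q12 ^ 2 * q21)
      + C ((a12 - a21) * (b22 - b21)) * (q12 * q21 ^ 2)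
      + C ((a12 - a21) * (b22 - b11) + (a11 - a22) * (b21 - b12))
          * (q11 * q12 * q21)
      = g1 * ((q11 + q12) * (C a21 * q21 + C a22 * q22)
              - (C a11 * q11 + C a12 * q12) * (q21 + q22))
      + g2 * ((q11 + q21) * (C b12 * q12 + C b22 * q22)
              - (C b11 * q11 + C b21 * q21) * (q12 + q22)) := by
  refine ⟨-(C (b22 - b11) * q11 + C (b22 - b21) * q21),
          C (a22 - a11) * q11 + C (a22 - a12) * q12, ?_⟩
  simp only [q11, q12, q21, q22, map_sub, map_add, map_mul]
  ring
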